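/- Let p̄ be a full-support probability distribution on 𝒳×𝒜 with policy π̄ = π_{p̄}, and let G(θ) = (1/η)·log(Σ_{x,a} p̄(x,a)·e^{η·Δ_θ(x,a)}) + (1−γ)·Σ_x ν₀(x)·V_θ(x) be the associated logistic Bellman error, with V_θ(x) = (1/α)·log(Σ_a π̄(a|x)·e^{α·Q_θ(x,a)}). Let θ* minimize G and θ̂ be arbitrary, with suboptimality gap ε = G(θ̂) − G(θ*). Define p*(x,a) ∝ p̄(x,a)·e^{η·Δ_{θ*}(x,a)} and p̃(x,a) ∝ p̄(x,a)·e^{η·Δ_{θ̂}(x,a)} (normalized to probability distributions), policies π*(a|x) = π̄(a|x)·e^{α·(Q_{θ*}(x,a) − V_{θ*}(x))} and π̂(a|x) = π̄(a|x)·e^{α·(Q_{θ̂}(x,a) − V_{θ̂}(x))}, and d*(x,a) = ν*(x)·π*(a|x) with ν*(x) = γ·Σ_{x',a'} P(x|x',a')·p*(x',a') + (1−γ)·ν₀(x). Then ε = D(p*‖p̃)/η + (1/α)·Σ_{x,a} d*(x,a)·log(π*(a|x)/π̂(a|x)). -/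

import Mathlib

/-!
View the logistic Bellman error as a function 𝒢 of the Q-function, so that G(θ) = 𝒢(Q_θ).
The distributions p*, p̃ are Gibbs distributions with base p̄ and the policies π*, π̂ are
soft-max policies with base π̄, so D(p*‖p̃) and Σ d* log(π*/π̂) are differences of
log-partition functions (resp. soft values) minus the expectations of Δ_θ̂ − Δ_θ* under p* and of
Q_θ̂ − Q_θ* under d*. The flow identity Σ_x ν*(x) v(x) = γ E_{p*}[P v] + (1 − γ) E_{ν₀}[v]
turns the value part of Δ_θ̂ − Δ_θ* into ν*-terms, and what remains beyond G(θ̂) − G(θ*) is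
E_{p*}[Q_θ̂ − Q_θ*] − E_{d*}[Q_θ̂ − Q_θ*]. Since θ ↦ Q_θ is linear, this is the derivative at
t = 0 of t ↦ 𝒢(Q_θ* + t (Q_θ̂ − Q_θ*)), which vanishes because θ* is a minimizer.
-/

open Finset Real

section LogSumExp

variable {ι : Type*} [Fintype ι]

lemma hasDerivAt_sum_mul_exp (c : ι → ℝ) {f : ℝ → ι → ℝ} {f' : ι → ℝ} {t : ℝ}
    (hf : ∀ i, HasDerivAt (fun s => f s i) (f' i) t) :
    HasDerivAt (fun s => ∑ i, c i * exp (f s i)) (∑ i, c i * exp (f t i) * f' i) t := by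
  simpa only [mul_assoc] using HasDerivAt.fun_sum fun i _ => ((hf i).exp).const_mul (c i)

end LogSumExp

noncomputable section Gibbs

variable {X A : Type*} [Fintype X] [Fintype A]

def partitionFn (p f : X → A → ℝ) : ℝ := ∑ x, ∑ a, p x a * exp (f x a)

def gibbs (p f : X → A → ℝ) (x : X) (a : A) : ℝ := p x a * exp (f x a) / partitionFn p f

def relEntropy (p p' : X → A → ℝ) : ℝ :=
  ∑ x, ∑ a, (p x a * log (p x a / p' x a) - p x a + p' x a)

variable [Nonempty X] [Nonempty A] {p : X → A → ℝ}

lemma partitionFn_pos (hp : ∀ x a, 0 < p x a) (f : X → A → ℝ) : 0 < partitionFn p f :=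
  sum_pos (fun x _ => sum_pos (fun a _ => mul_pos (hp x a) (exp_pos _)) univ_nonempty)
    univ_nonempty

lemma sum_gibbs (hp : ∀ x a, 0 < p x a) (f : X → A → ℝ) : ∑ x, ∑ a, gibbs p f x a = 1 := by
  simp only [gibbs, ← sum_div]
  exact div_self (partitionFn_pos hp f).ne'

lemma log_gibbs_div_gibbs (hp : ∀ x a, 0 < p x a) (f f' : X → A → ℝ) (x : X) (a : A) :
    log (gibbs p f x a / gibbs p f' x a)
      = f x a - f' x a + log (partitionFn p f') - log (partitionFn p f) := by
  have hZ := partitionFn_pos hp f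
  have hZ' := partitionFn_pos hp f'
  have hpx := hp x a
  rw [gibbs, gibbs, log_div (by positivity) (by positivity), log_div (by positivity) hZ.ne',
    log_div (by positivity) hZ'.ne', log_mul hpx.ne' (exp_pos _).ne',
    log_mul hpx.ne' (exp_pos _).ne', log_exp, log_exp]
  ring

lemma relEntropy_gibbs (hp : ∀ x a, 0 < p x a) (f f' : X → A → ℝ) :
    relEntropy (gibbs p f) (gibbs p f')
      = log (partitionFn p f') - log (partitionFn p f)
        - ∑ x, ∑ a, gibbs p f x a * (f' x a - f x a) := by
  have hterm : ∀ x a, gibbs p f x a * log (gibbs p f x a / gibbs p f' x a) - gibbs p f x a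
      + gibbs p f' x a = (log (partitionFn p f') - log (partitionFn p f)) * gibbs p f x a
        - gibbs p f x a * (f' x a - f x a) - gibbs p f x a + gibbs p f' x a := fun x a => by
    rw [log_gibbs_div_gibbs hp]; ring
  simp only [relEntropy, hterm, sum_add_distrib, sum_sub_distrib, ← mul_sum, sum_gibbs hp]
  ring

lemma hasDerivAt_log_partitionFn (hp : ∀ x a, 0 < p x a) {f : ℝ → X → A → ℝ}
    {f' : X → A → ℝ} {t : ℝ} (hf : ∀ x a, HasDerivAt (fun s => f s x a) (f' x a) t) :
    HasDerivAt (fun s => log (partitionFn p (f s))) (∑ x, ∑ a, gibbs p (f t) x a * f' x a) t := by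
  have hZ : HasDerivAt (fun s => partitionFn p (f s))
      (∑ x, ∑ a, p x a * exp (f t x a) * f' x a) t :=
    HasDerivAt.fun_sum fun x _ => hasDerivAt_sum_mul_exp (p x) (hf x)
  convert hZ.log (partitionFn_pos hp (f t)).ne' using 1
  simp only [gibbs, sum_div]
  exact sum_congr rfl fun x _ => sum_congr rfl fun a _ => by ring

end Gibbs

noncomputable section SoftValue

variable {A : Type*} [Fintype A] {α : ℝ} {ρ : A → ℝ}

def softValue (α : ℝ) (ρ q : A → ℝ) : ℝ := 1 / α * log (∑ a, ρ a * exp (α * q a))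

def softPolicy (α : ℝ) (ρ q : A → ℝ) (a : A) : ℝ := ρ a * exp (α * (q a - softValue α ρ q))

lemma log_softPolicy_div (hρ : ∀ a, 0 < ρ a) (q q' : A → ℝ) (a : A) :
    log (softPolicy α ρ q a / softPolicy α ρ q' a)
      = α * (q a - softValue α ρ q) - α * (q' a - softValue α ρ q') := by
  rw [softPolicy, softPolicy, mul_div_mul_left _ _ (hρ a).ne', ← exp_sub, log_exp]

variable [Nonempty A]

lemma sum_mul_exp_pos (hρ : ∀ a, 0 < ρ a) (q : A → ℝ) : 0 < ∑ a, ρ a * exp (α * q a) :=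
  sum_pos (fun a _ => mul_pos (hρ a) (exp_pos _)) univ_nonempty

lemma softPolicy_eq (hα : α ≠ 0) (hρ : ∀ a, 0 < ρ a) (q : A → ℝ) (a : A) :
    softPolicy α ρ q a = ρ a * exp (α * q a) / ∑ a', ρ a' * exp (α * q a') := by
  rw [softPolicy, mul_sub, exp_sub, softValue, ← mul_assoc, mul_one_div_cancel hα, one_mul,
    exp_log (sum_mul_exp_pos hρ q), mul_div_assoc]

lemma sum_softPolicy (hα : α ≠ 0) (hρ : ∀ a, 0 < ρ a) (q : A → ℝ) :
    ∑ a, softPolicy α ρ q a = 1 := by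
  simp only [softPolicy_eq hα hρ, ← sum_div]
  exact div_self (sum_mul_exp_pos hρ q).ne'

lemma sum_softPolicy_mul_log_div (hα : α ≠ 0) (hρ : ∀ a, 0 < ρ a) (q q' : A → ℝ) :
    ∑ a, softPolicy α ρ q a * log (softPolicy α ρ q a / softPolicy α ρ q' a)
      = α * (softValue α ρ q' - softValue α ρ q
        - ∑ a, softPolicy α ρ q a * (q' a - q a)) := by
  have hterm : ∀ a, softPolicy α ρ q a * log (softPolicy α ρ q a / softPolicy α ρ q' a)
      = α * (softValue α ρ q' - softValue α ρ q) * softPolicy α ρ q a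
        - α * (softPolicy α ρ q a * (q' a - q a)) := fun a => by
    rw [log_softPolicy_div hρ]; ring
  simp only [hterm, sum_sub_distrib, ← mul_sum, sum_softPolicy hα hρ]
  ring

lemma hasDerivAt_softValue (hα : α ≠ 0) (hρ : ∀ a, 0 < ρ a) (q d : A → ℝ) :
    HasDerivAt (fun t : ℝ => softValue α ρ (q + t • d)) (∑ a, softPolicy α ρ q a * d a) 0 := by
  have hline : ∀ a, HasDerivAt (fun t : ℝ => α * (q + t • d) a) (α * d a) 0 := fun a => by
    simpa using ((hasDerivAt_id (0 : ℝ)).mul_const (d a)).const_add (q a) |>.const_mul α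
  have hS := (hasDerivAt_sum_mul_exp ρ hline).log (by simpa using (sum_mul_exp_pos hρ q).ne')
  refine (hS.const_mul (1 / α)).congr_deriv ?_
  simp only [softPolicy_eq hα hρ, zero_smul, add_zero, sum_div, mul_sum]
  exact sum_congr rfl fun a _ => by field_simp

end SoftValue

noncomputable section LogisticBellman

variable {X A : Type*} [Fintype X] [Fintype A]
variable (P : X → A → X → ℝ) (r : X → A → ℝ) (γ : ℝ) (ν₀ : X → ℝ) (α η : ℝ)
  (pbar ρ : X → A → ℝ)

def stateOccupancy (p : X → A → ℝ) (x : X) : ℝ :=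
  γ * (∑ x', ∑ a', P x' a' x * p x' a') + (1 - γ) * ν₀ x

def bellmanResidual (q : X → A → ℝ) (x : X) (a : A) : ℝ :=
  r x a + γ * (∑ x', P x a x' * softValue α (ρ x') (q x')) - q x a

def logisticBellmanError (q : X → A → ℝ) : ℝ :=
  1 / η * log (partitionFn pbar fun x a => η * bellmanResidual P r γ α ρ q x a)
    + (1 - γ) * ∑ x, ν₀ x * softValue α (ρ x) (q x)

def logisticDistribution (q : X → A → ℝ) : X → A → ℝ :=
  gibbs pbar fun x a => η * bellmanResidual P r γ α ρ q x a

local notation "𝒢" => logisticBellmanError P r γ ν₀ α η pbar ρ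
local notation "𝓅" => logisticDistribution P r γ α η pbar ρ

lemma sum_stateOccupancy_mul (p : X → A → ℝ) (v : X → ℝ) :
    ∑ x, stateOccupancy P γ ν₀ p x * v x
      = γ * ∑ x, ∑ a, p x a * ∑ x', P x a x' * v x' + (1 - γ) * ∑ x, ν₀ x * v x := by
  simp only [stateOccupancy, add_mul, sum_add_distrib, mul_sum, sum_mul, mul_assoc]
  congr 1
  rw [sum_comm]
  refine sum_congr rfl fun x _ => ?_
  rw [sum_comm]
  exact sum_congr rfl fun a _ => sum_congr rfl fun x' _ => by ring

variable {P r γ ν₀ α η pbar ρ} [Nonempty A]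

lemma hasDerivAt_bellmanResidual (hα : α ≠ 0) (hρ : ∀ x a, 0 < ρ x a) (q d : X → A → ℝ)
    (x : X) (a : A) :
    HasDerivAt (fun t : ℝ => bellmanResidual P r γ α ρ (q + t • d) x a)
      (γ * (∑ x', P x a x' * ∑ a', softPolicy α (ρ x') (q x') a' * d x' a') - d x a) 0 := by
  have hV : HasDerivAt (fun t : ℝ => ∑ x', P x a x' * softValue α (ρ x') ((q + t • d) x'))
      (∑ x', P x a x' * ∑ a', softPolicy α (ρ x') (q x') a' * d x' a') 0 :=
    HasDerivAt.fun_sum fun x' _ => (hasDerivAt_softValue hα (hρ x') (q x') (d x')).const_mul _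
  have hq : HasDerivAt (fun t : ℝ => (q + t • d) x a) (d x a) 0 := by
    simpa using ((hasDerivAt_id (0 : ℝ)).mul_const (d x a)).const_add (q x a)
  exact ((hV.const_mul γ).const_add (r x a)).sub hq

variable [Nonempty X]

lemma hasDerivAt_logisticBellmanError (hα : α ≠ 0) (hη : η ≠ 0) (hpbar : ∀ x a, 0 < pbar x a)
    (hρ : ∀ x a, 0 < ρ x a) (q d : X → A → ℝ) :
    HasDerivAt (fun t : ℝ => 𝒢 (q + t • d))
      (∑ x, stateOccupancy P γ ν₀ (𝓅 q) x * ∑ a, softPolicy α (ρ x) (q x) a * d x a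
        - ∑ x, ∑ a, 𝓅 q x a * d x a) 0 := by
  have hZ := hasDerivAt_log_partitionFn hpbar fun x a =>
    (hasDerivAt_bellmanResidual (P := P) (r := r) (γ := γ) hα hρ q d x a).const_mul η
  have hV : HasDerivAt (fun t : ℝ => ∑ x, ν₀ x * softValue α (ρ x) ((q + t • d) x))
      (∑ x, ν₀ x * ∑ a, softPolicy α (ρ x) (q x) a * d x a) 0 :=
    HasDerivAt.fun_sum fun x _ => (hasDerivAt_softValue hα (hρ x) (q x) (d x)).const_mul _
  refine ((hZ.const_mul (1 / η)).add (hV.const_mul (1 - γ))).congr_deriv ?_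
  have hterm : ∀ (p : X → A → ℝ) x a,
      p x a * (η * (γ * ∑ x', P x a x' * ∑ a', softPolicy α (ρ x') (q x') a' * d x' a' - d x a))
      = η * (γ * (p x a * ∑ x', P x a x' * ∑ a', softPolicy α (ρ x') (q x') a' * d x' a')
        - p x a * d x a) := fun p x a => by ring
  simp only [zero_smul, add_zero, sum_stateOccupancy_mul, logisticDistribution, hterm,
    ← mul_sum, sum_sub_distrib]
  field_simp
  ring

lemma sum_stateOccupancy_mul_eq_of_forall_le (hα : α ≠ 0) (hη : η ≠ 0)
    (hpbar : ∀ x a, 0 < pbar x a) (hρ : ∀ x a, 0 < ρ x a) {q d : X → A → ℝ}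
    (hmin : ∀ t : ℝ, 𝒢 q ≤ 𝒢 (q + t • d)) :
    ∑ x, stateOccupancy P γ ν₀ (𝓅 q) x * ∑ a, softPolicy α (ρ x) (q x) a * d x a
      = ∑ x, ∑ a, 𝓅 q x a * d x a := by
  have hloc : IsLocalMin (fun t : ℝ => 𝒢 (q + t • d)) 0 :=
    Filter.Eventually.of_forall fun t => by simpa using hmin t
  exact sub_eq_zero.mp (hloc.hasDerivAt_eq_zero
    (hasDerivAt_logisticBellmanError hα hη hpbar hρ q d))

theorem logisticBellmanError_sub_eq (hα : α ≠ 0) (hη : η ≠ 0) (hpbar : ∀ x a, 0 < pbar x a)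
    (hρ : ∀ x a, 0 < ρ x a) (q₀ q₁ : X → A → ℝ)
    (hbal : ∑ x, stateOccupancy P γ ν₀ (𝓅 q₀) x
        * ∑ a, softPolicy α (ρ x) (q₀ x) a * (q₁ x a - q₀ x a)
      = ∑ x, ∑ a, 𝓅 q₀ x a * (q₁ x a - q₀ x a)) :
    𝒢 q₁ - 𝒢 q₀ = relEntropy (𝓅 q₀) (𝓅 q₁) / η
        + 1 / α * ∑ x, ∑ a, stateOccupancy P γ ν₀ (𝓅 q₀) x
          * softPolicy α (ρ x) (q₀ x) a
          * log (softPolicy α (ρ x) (q₀ x) a / softPolicy α (ρ x) (q₁ x) a) := by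
  set p₀ := 𝓅 q₀
  set ν := stateOccupancy P γ ν₀ p₀
  set dV : X → ℝ := fun x => softValue α (ρ x) (q₁ x) - softValue α (ρ x) (q₀ x)
  have hres : ∀ x a, p₀ x a * (η * bellmanResidual P r γ α ρ q₁ x a
        - η * bellmanResidual P r γ α ρ q₀ x a)
      = η * (γ * (p₀ x a * ∑ x', P x a x' * dV x') - p₀ x a * (q₁ x a - q₀ x a)) := fun x a => by
    simp only [bellmanResidual, dV, mul_sub, sum_sub_distrib]
    ring
  have hKL : relEntropy p₀ (𝓅 q₁)
      = log (partitionFn pbar fun x a => η * bellmanResidual P r γ α ρ q₁ x a)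
        - log (partitionFn pbar fun x a => η * bellmanResidual P r γ α ρ q₀ x a)
        - η * (γ * ∑ x, ∑ a, p₀ x a * ∑ x', P x a x' * dV x'
          - ∑ x, ∑ a, p₀ x a * (q₁ x a - q₀ x a)) := by
    refine (relEntropy_gibbs hpbar _ _).trans (congrArg _ ?_)
    refine (sum_congr rfl fun x _ => sum_congr rfl fun a _ => hres x a).trans ?_
    simp only [← mul_sum, sum_sub_distrib]
  have hflow : ∑ x, ν x * dV x
      = γ * ∑ x, ∑ a, p₀ x a * ∑ x', P x a x' * dV x' + (1 - γ) * ∑ x, ν₀ x * dV x :=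
    sum_stateOccupancy_mul P γ ν₀ p₀ dV
  have hpol : ∑ x, ∑ a, ν x * softPolicy α (ρ x) (q₀ x) a
        * log (softPolicy α (ρ x) (q₀ x) a / softPolicy α (ρ x) (q₁ x) a)
      = α * (∑ x, ν x * dV x
        - ∑ x, ν x * ∑ a, softPolicy α (ρ x) (q₀ x) a * (q₁ x a - q₀ x a)) := by
    simp only [mul_assoc, ← mul_sum, sum_softPolicy_mul_log_div hα (hρ _)]
    rw [mul_sub, mul_sum, mul_sum, ← sum_sub_distrib]
    exact sum_congr rfl fun x _ => by ring
  have hdV : ∑ x, ν₀ x * dV x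
      = ∑ x, ν₀ x * softValue α (ρ x) (q₁ x) - ∑ x, ν₀ x * softValue α (ρ x) (q₀ x) := by
    simp only [dV, mul_sub, sum_sub_distrib]
  rw [logisticBellmanError, logisticBellmanError, hKL, hpol, hbal]
  field_simp
  linear_combination (-η) * hflow - η * (1 - γ) * hdV

end LogisticBellman

theorem stmt8_general {X A : Type*} [Fintype X] [Fintype A] [Nonempty X] [Nonempty A]
    {m : ℕ} (P : X → A → X → ℝ) (r : X → A → ℝ) (γ : ℝ) (ν₀ : X → ℝ)
    (φ : X → A → Fin m → ℝ) (α η : ℝ)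
    (hα : 0 < α) (hη : 0 < η)
    -- the full-support reference distribution p̄ and its policy π̄
    (pbar : X → A → ℝ) (hpbarpos : ∀ x a, 0 < pbar x a)
    (πbar : X → A → ℝ) (hπbar : ∀ x a, πbar x a = pbar x a / ∑ a', pbar x a')
    (Q : (Fin m → ℝ) → X → A → ℝ)
    (hQ : ∀ θ x a, Q θ x a = ∑ i, θ i * φ x a i)
    (V : (Fin m → ℝ) → X → ℝ)
    (hV : ∀ θ x, V θ x = (1 / α) * Real.log (∑ a, πbar x a * Real.exp (α * Q θ x a)))
    (Δ : (Fin m → ℝ) → X → A → ℝ)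
    (hΔ : ∀ θ x a, Δ θ x a = r x a + γ * (∑ x', P x a x' * V θ x') - Q θ x a)
    (G : (Fin m → ℝ) → ℝ)
    (hG : ∀ θ, G θ = (1 / η) * Real.log (∑ x, ∑ a, pbar x a * Real.exp (η * Δ θ x a))
        + (1 - γ) * ∑ x, ν₀ x * V θ x)
    -- the exact minimizer θ*, an arbitrary θ̂ and its suboptimality gap ε
    (θs θh : Fin m → ℝ) (hθs : ∀ θ, G θs ≤ G θ)
    (ε : ℝ) (hε : ε = G θh - G θs)
    -- the induced distributions and policies
    (ps pt : X → A → ℝ)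
    (hps : ∀ x a, ps x a = pbar x a * Real.exp (η * Δ θs x a)
        / ∑ x', ∑ a', pbar x' a' * Real.exp (η * Δ θs x' a'))
    (hpt : ∀ x a, pt x a = pbar x a * Real.exp (η * Δ θh x a)
        / ∑ x', ∑ a', pbar x' a' * Real.exp (η * Δ θh x' a'))
    (πs πh : X → A → ℝ)
    (hπs : ∀ x a, πs x a = πbar x a * Real.exp (α * (Q θs x a - V θs x)))
    (hπh : ∀ x a, πh x a = πbar x a * Real.exp (α * (Q θh x a - V θh x)))
    (νs : X → ℝ)
    (hνs : ∀ x, νs x = γ * (∑ x', ∑ a', P x' a' x * ps x' a') + (1 - γ) * ν₀ x)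
    (ds : X → A → ℝ) (hds : ∀ x a, ds x a = νs x * πs x a) :
    ε = (∑ x, ∑ a, (ps x a * Real.log (ps x a / pt x a) - ps x a + pt x a)) / η
        + (1 / α) * ∑ x, ∑ a, ds x a * Real.log (πs x a / πh x a) := by
  obtain rfl : V = fun θ x => softValue α (πbar x) (Q θ x) := funext₂ hV
  obtain rfl : Δ = fun θ => bellmanResidual P r γ α πbar (Q θ) := funext₃ hΔ
  obtain rfl : G = fun θ => logisticBellmanError P r γ ν₀ α η pbar πbar (Q θ) := funext hG
  obtain rfl : ds = fun x a => νs x * πs x a := funext₂ hds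
  obtain rfl : νs = stateOccupancy P γ ν₀ ps := funext hνs
  obtain rfl : ps = logisticDistribution P r γ α η pbar πbar (Q θs) := funext₂ hps
  obtain rfl : pt = logisticDistribution P r γ α η pbar πbar (Q θh) := funext₂ hpt
  obtain rfl : πs = fun x => softPolicy α (πbar x) (Q θs x) := funext₂ hπs
  obtain rfl : πh = fun x => softPolicy α (πbar x) (Q θh x) := funext₂ hπh
  subst hε
  have hπbarpos : ∀ x a, 0 < πbar x a := fun x a => by
    rw [hπbar]
    exact div_pos (hpbarpos x a) (sum_pos (fun a _ => hpbarpos x a) univ_nonempty)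
  have hline : ∀ t : ℝ, Q (θs + t • (θh - θs)) = Q θs + t • (Q θh - Q θs) := fun t => by
    funext x a
    simp only [hQ, Pi.add_apply, Pi.smul_apply, Pi.sub_apply, smul_eq_mul, add_mul, sub_mul,
      mul_assoc, sum_add_distrib, sum_sub_distrib, ← mul_sum]
  have hbal := sum_stateOccupancy_mul_eq_of_forall_le hα.ne' hη.ne' hpbarpos hπbarpos
    fun t => by rw [← hline]; exact hθs _
  exact logisticBellmanError_sub_eq hα.ne' hη.ne' hpbarpos hπbarpos _ _ hbal

/-- The suboptimality gap ε = G(θ̂) − G(θ*) of the logistic Bellman error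
decomposes exactly as ε = D(p*‖p̃)/η + (1/α)·Σ_{x,a} d*(x,a)·log(π*(a|x)/π̂(a|x)). -/
theorem stmt8 {X A : Type*} [Fintype X] [Fintype A] [Nonempty X] [Nonempty A]
    {m : ℕ} (P : X → A → X → ℝ) (r : X → A → ℝ) (γ : ℝ) (ν₀ : X → ℝ)
    (φ : X → A → Fin m → ℝ) (α η : ℝ)
    (hP0 : ∀ x a x', 0 ≤ P x a x') (hP1 : ∀ x a, ∑ x', P x a x' = 1)
    (hr : ∀ x a, 0 ≤ r x a ∧ r x a ≤ 1)
    (hγ0 : 0 < γ) (hγ1 : γ < 1)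
    (hν₀0 : ∀ x, 0 ≤ ν₀ x) (hν₀1 : ∑ x, ν₀ x = 1)
    (hα : 0 < α) (hη : 0 < η)
    -- the full-support reference distribution p̄ and its policy π̄
    (pbar : X → A → ℝ) (hpbarpos : ∀ x a, 0 < pbar x a)
    (hpbar1 : ∑ x, ∑ a, pbar x a = 1)
    (πbar : X → A → ℝ) (hπbar : ∀ x a, πbar x a = pbar x a / ∑ a', pbar x a')
    (Q : (Fin m → ℝ) → X → A → ℝ)
    (hQ : ∀ θ x a, Q θ x a = ∑ i, θ i * φ x a i)
    (V : (Fin m → ℝ) → X → ℝ)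
    (hV : ∀ θ x, V θ x = (1 / α) * Real.log (∑ a, πbar x a * Real.exp (α * Q θ x a)))
    (Δ : (Fin m → ℝ) → X → A → ℝ)
    (hΔ : ∀ θ x a, Δ θ x a = r x a + γ * (∑ x', P x a x' * V θ x') - Q θ x a)
    (G : (Fin m → ℝ) → ℝ)
    (hG : ∀ θ, G θ = (1 / η) * Real.log (∑ x, ∑ a, pbar x a * Real.exp (η * Δ θ x a))
        + (1 - γ) * ∑ x, ν₀ x * V θ x)
    -- the exact minimizer θ*, an arbitrary θ̂ and its suboptimality gap ε
    (θs θh : Fin m → ℝ) (hθs : ∀ θ, G θs ≤ G θ)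
    (ε : ℝ) (hε : ε = G θh - G θs)
    -- the induced distributions and policies
    (ps pt : X → A → ℝ)
    (hps : ∀ x a, ps x a = pbar x a * Real.exp (η * Δ θs x a)
        / ∑ x', ∑ a', pbar x' a' * Real.exp (η * Δ θs x' a'))
    (hpt : ∀ x a, pt x a = pbar x a * Real.exp (η * Δ θh x a)
        / ∑ x', ∑ a', pbar x' a' * Real.exp (η * Δ θh x' a'))
    (πs πh : X → A → ℝ)
    (hπs : ∀ x a, πs x a = πbar x a * Real.exp (α * (Q θs x a - V θs x)))
    (hπh : ∀ x a, πh x a = πbar x a * Real.exp (α * (Q θh x a - V θh x)))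
    (νs : X → ℝ)
    (hνs : ∀ x, νs x = γ * (∑ x', ∑ a', P x' a' x * ps x' a') + (1 - γ) * ν₀ x)
    (ds : X → A → ℝ) (hds : ∀ x a, ds x a = νs x * πs x a) :
    ε = (∑ x, ∑ a, (ps x a * Real.log (ps x a / pt x a) - ps x a + pt x a)) / η
        + (1 / α) * ∑ x, ∑ a, ds x a * Real.log (πs x a / πh x a) :=
  stmt8_general P r γ ν₀ φ α η hα hη pbar hpbarpos πbar hπbar Q hQ V hV Δ hΔ G hG θs θh hθs ε hε ps
    pt hps hpt πs πh hπs hπh νs hνs ds hds
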